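/- arXiv:math/0410237 — 3 statements merged into one kernel-verified Lean document; each statement's English description precedes it below -/
import Mathlib

section
/- Suppose H : ℝ^{2n} → ℝ is smooth and F : ℝ^{2n} × ℝ^{2n} → ℝ is a smooth function such that for all x, y: (∂F/∂x)(x,y) = H'(x) and (∂F/∂y)(x,y) = H''(x)·y. Then H'' is a constant matrix; equivalently, all third partial derivatives of H vanish, so H is a polynomial of degree at most 2. -/
open Matrix

abbrev EE (n : ℕ) := Fin (n+n) → ℝ

noncomputable def grad {N : ℕ} (f : (Fin N → ℝ) → ℝ) (x : Fin N → ℝ) : Fin N → ℝ :=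
  fun i => fderiv ℝ f x (Pi.single i 1)

noncomputable def hess {N : ℕ} (f : (Fin N → ℝ) → ℝ) (x : Fin N → ℝ) :
    Matrix (Fin N) (Fin N) ℝ :=
  Matrix.of fun i j => fderiv ℝ (fun y => fderiv ℝ f y (Pi.single j 1)) x (Pi.single i 1)

/-- if a smooth F satisfies ∂F/∂x = H'(x) and ∂F/∂y = H''(x)·y for all
(x,y), then the Hessian H'' is a constant matrix. -/
theorem two_system_stmt_1 (n : ℕ) (H : (Fin (n+n) → ℝ) → ℝ)
    (F : (Fin (n+n) → ℝ) × (Fin (n+n) → ℝ) → ℝ)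
    (hH : ContDiff ℝ (⊤ : ℕ∞) H) (hF : ContDiff ℝ (⊤ : ℕ∞) F)
    (hFx : ∀ x y : Fin (n+n) → ℝ, grad (fun x' => F (x', y)) x = grad H x)
    (hFy : ∀ x y : Fin (n+n) → ℝ, grad (fun y' => F (x, y')) y = (hess H x).mulVec y) :
    ∀ a b : Fin (n+n) → ℝ, hess H a = hess H b := by
  classical
  have hFd : Differentiable ℝ F := hF.differentiable (by simp)
  set G := fderiv ℝ F with hG
  have hGc : ContDiff ℝ (⊤ : ℕ∞) G := hF.fderiv_right (by simp)
  have hGd : Differentiable ℝ G := hGc.differentiable (by simp)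
  -- derivative of the slice functions
  have sliceL : ∀ (x y : (EE n)), HasFDerivAt (fun x' => F (x', y))
      ((G (x, y)).comp (ContinuousLinearMap.inl ℝ (EE n) (EE n))) x := by
    intro x y
    exact (hFd (x, y)).hasFDerivAt.comp x (hasFDerivAt_prodMk_left x y)
  have sliceR : ∀ (x y : (EE n)), HasFDerivAt (fun y' => F (x, y'))
      ((G (x, y)).comp (ContinuousLinearMap.inr ℝ (EE n) (EE n))) y := by
    intro x y
    exact (hFd (x, y)).hasFDerivAt.comp y (hasFDerivAt_prodMk_right x y)
  -- Lemma A: the x-partial derivative of F equals fderiv H x, independent of y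
  have lemA : ∀ (x y : (EE n)) (v : (EE n)), G (x, y) (v, 0) = fderiv ℝ H x v := by
    intro x y v
    have h1 : (G (x, y)).comp (ContinuousLinearMap.inl ℝ (EE n) (EE n)) = fderiv ℝ H x := by
      apply ContinuousLinearMap.coe_injective
      apply LinearMap.pi_ext'
      intro i
      apply LinearMap.ext_ring
      have := congrFun (hFx x y) i
      simp only [grad] at this
      rw [(sliceL x y).fderiv] at this
      simpa using this
    have := congrFun (congrArg (fun L : (EE n) →L[ℝ] ℝ => (L : (EE n) → ℝ)) h1) v
    simpa using this
  -- hess H x j k in terms of G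
  have hessEq : ∀ (x : (EE n)) (j k : Fin (n+n)),
      hess H x j k = G (x, Pi.single k 1) (0, Pi.single j 1) := by
    intro x j k
    have := congrFun (hFy x (Pi.single k 1)) j
    simp only [grad] at this
    rw [(sliceR x (Pi.single k 1)).fderiv] at this
    have hmv : (hess H x).mulVec (Pi.single k 1) j = hess H x j k := by
      simp [Matrix.mulVec_single]
    rw [hmv] at this
    rw [← this]
    simp
  -- Now fix j k; show x ↦ G (x, y0) (0, e_j) is constant, where y0 = e_k
  have key : ∀ (j k : Fin (n+n)) (a b : (EE n)),
      G (a, Pi.single k 1) (0, Pi.single j 1) = G (b, Pi.single k 1) (0, Pi.single j 1) := by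
    intro j k a b
    set y0 : (EE n) := Pi.single k 1
    set w : (EE n) × (EE n) := ((0 : (EE n)), Pi.single j 1)
    set φ : (EE n) → ℝ := fun x => G (x, y0) w with hφ
    have hconst : ∀ x : (EE n), fderiv ℝ φ x = 0 := by
      intro x
      -- φ = eval_w ∘ G ∘ (x ↦ (x, y0))
      have hGat : HasFDerivAt (fun p : (EE n) × (EE n) => G p w)
          ((fderiv ℝ G (x, y0)).flip w) (x, y0) := by
        have h1 : HasFDerivAt G (fderiv ℝ G (x, y0)) (x, y0) :=
          (hGd (x, y0)).hasFDerivAt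
        exact (ContinuousLinearMap.apply ℝ ℝ w).hasFDerivAt.comp (x, y0) h1
      have hφd : HasFDerivAt φ
          (((fderiv ℝ G (x, y0)).flip w).comp (ContinuousLinearMap.inl ℝ (EE n) (EE n))) x :=
        by have := hGat.comp x (hasFDerivAt_prodMk_left (𝕜 := ℝ) x y0); exact this
      rw [hφd.fderiv]
      ext v
      simp only [ContinuousLinearMap.coe_comp', Function.comp_apply,
        ContinuousLinearMap.inl_apply, ContinuousLinearMap.flip_apply,
        ContinuousLinearMap.zero_apply]
      -- goal : fderiv ℝ G (x, y0) (v, 0) w = 0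
      have hsym : IsSymmSndFDerivAt ℝ F (x, y0) := by
        apply ContDiffAt.isSymmSndFDerivAt (hF.contDiffAt) (by rw [minSmoothness_of_isRCLikeNormedField]; exact WithTop.coe_le_coe.mpr (le_top : (2 : ℕ∞) ≤ ⊤))
      have h2 : fderiv ℝ G (x, y0) (v, 0) w = fderiv ℝ G (x, y0) w (v, 0) := hsym _ _
      rw [h2]
      -- fun p => G p (v, 0) = fun p => fderiv ℝ H p.1 v
      have hfun : (fun p : (EE n) × (EE n) => G p (v, 0)) = (fun p : (EE n) × (EE n) => fderiv ℝ H p.1 v) := by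
        funext p
        exact lemA p.1 p.2 v
      have h3 : fderiv ℝ G (x, y0) w (v, 0)
          = fderiv ℝ (fun p : (EE n) × (EE n) => G p (v, 0)) (x, y0) w := by
        have : HasFDerivAt (fun p : (EE n) × (EE n) => G p (v, 0))
            ((fderiv ℝ G (x, y0)).flip (v, 0)) (x, y0) :=
          (ContinuousLinearMap.apply ℝ ℝ ((v : (EE n)), (0 : (EE n)))).hasFDerivAt.comp (x, y0)
            (hGd (x, y0)).hasFDerivAt
        rw [this.fderiv]; rfl
      rw [h3, hfun]
      -- derivative of p ↦ fderiv H p.1 v at (x,y0) in direction w = (0, e_j) is 0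
      have hHd : Differentiable ℝ (fderiv ℝ H) := (hH.fderiv_right (m := (⊤ : ℕ∞)) (by simp)).differentiable (by simp)
      have h4 : HasFDerivAt (fun p : (EE n) × (EE n) => fderiv ℝ H p.1 v)
          ((((fderiv ℝ (fderiv ℝ H) x).flip v)).comp (ContinuousLinearMap.fst ℝ (EE n) (EE n)))
          (x, y0) := by
        have h5 : HasFDerivAt (fun z : (EE n) => fderiv ℝ H z v)
            ((fderiv ℝ (fderiv ℝ H) x).flip v) x :=
          (ContinuousLinearMap.apply ℝ ℝ v).hasFDerivAt.comp x (hHd x).hasFDerivAt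
        exact h5.comp (x, y0) (hasFDerivAt_fst (𝕜 := ℝ) (p := (x, y0)))
      rw [h4.fderiv]
      simp [w]
    have hφdiff : Differentiable ℝ φ := fun x =>
      ((ContinuousLinearMap.apply ℝ ℝ w).hasFDerivAt.comp x
        (((hGd (x, y0)).hasFDerivAt).comp x (hasFDerivAt_prodMk_left x y0))).differentiableAt
    exact is_const_of_fderiv_eq_zero hφdiff hconst a b
  intro a b
  ext j k
  rw [hessEq a j k, hessEq b j k, key j k a b]
end

section
/- For the Poisson-type bracket {U,V}(x,Φ) = (U')ᵀ·J·V' + 2·tr(Φᵀ·[∇_Φ U, ∇_Φ V]) on ℝ^{2n} × sp(2n,ℝ), the Hamilton equations with Hamilton's function 𝓗(x,Φ) = H(x) − (1/2)·tr(H''(x)·J·Φ) reproduce the two-system: {x, 𝓗} = J·(H(x) − (1/2)tr(H''(x)J·Φ))' and {Φᵢⱼ, 𝓗} = [H''(x)·J, Φ]ᵢⱼ. -/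
open Matrix

noncomputable def Jmat (n : ℕ) : Matrix (Fin (n+n)) (Fin (n+n)) ℝ :=
  Matrix.reindex finSumFinEquiv finSumFinEquiv (Matrix.fromBlocks 0 1 (-1) 0)

/-- Gradient in the x-variables of a function on ℝ^{2n} × sp(2n,ℝ). -/
noncomputable def gradX {N : ℕ} (U : (Fin N → ℝ) → (Fin N → Fin N → ℝ) → ℝ)
    (x : Fin N → ℝ) (Φ : Fin N → Fin N → ℝ) : Fin N → ℝ :=
  fun i => fderiv ℝ (fun x' => U x' Φ) x (Pi.single i 1)

/-- Matrix gradient ∇_Φ of a function on ℝ^{2n} × sp(2n,ℝ). -/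
noncomputable def gradP {N : ℕ} (U : (Fin N → ℝ) → (Fin N → Fin N → ℝ) → ℝ)
    (x : Fin N → ℝ) (Φ : Fin N → Fin N → ℝ) : Matrix (Fin N) (Fin N) ℝ :=
  Matrix.of fun i j => fderiv ℝ (fun Φ' => U x Φ') Φ (Pi.single i (Pi.single j 1))

/-- The Poisson-type bracket {U,V}(x,Φ) = U'ᵀ·J·V' + 2·tr(Φᵀ·[∇_Φ U, ∇_Φ V]). -/
noncomputable def bracket (n : ℕ)
    (U V : (Fin (n+n) → ℝ) → (Fin (n+n) → Fin (n+n) → ℝ) → ℝ)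
    (x : Fin (n+n) → ℝ) (Φ : Fin (n+n) → Fin (n+n) → ℝ) : ℝ :=
  gradX U x Φ ⬝ᵥ (Jmat n).mulVec (gradX V x Φ)
    + 2 * ((Matrix.of Φ)ᵀ
        * (gradP U x Φ * gradP V x Φ - gradP V x Φ * gradP U x Φ)).trace

/-- trace(A·Φ') as a continuous linear map in Φ'. -/
noncomputable def traceCLM {N : ℕ} (A : Matrix (Fin N) (Fin N) ℝ) :
    (Fin N → Fin N → ℝ) →L[ℝ] ℝ :=
  ∑ p, ∑ q, A p q • ((ContinuousLinearMap.proj p).comp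
    (ContinuousLinearMap.proj q : (Fin N → Fin N → ℝ) →L[ℝ] (Fin N → ℝ)))

lemma traceCLM_apply {N : ℕ} (A : Matrix (Fin N) (Fin N) ℝ) (Φ' : Fin N → Fin N → ℝ) :
    traceCLM A Φ' = (A * Matrix.of Φ').trace := by
  simp [traceCLM, Matrix.trace, Matrix.diag, Matrix.mul_apply, Finset.mul_sum,
    ContinuousLinearMap.sum_apply, mul_comm]

lemma traceCLM_single {N : ℕ} (A : Matrix (Fin N) (Fin N) ℝ) (a b : Fin N) :
    traceCLM A (Pi.single a (Pi.single b 1)) = A b a := by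
  simp [traceCLM, ContinuousLinearMap.sum_apply, Pi.single_apply, ite_apply,
    Finset.sum_ite_eq, Finset.sum_ite_eq']

lemma gradP_H {N : ℕ} (c : ℝ) (A : Matrix (Fin N) (Fin N) ℝ)
    (x : Fin N → ℝ) (Φ : Fin N → Fin N → ℝ) :
    gradP (fun _ Φ' => c - (1/2) * (A * Matrix.of Φ').trace) x Φ
      = Matrix.of fun a b => -(1/2) * A b a := by
  have h : (fun Φ' : Fin N → Fin N → ℝ => c - (1/2) * (A * Matrix.of Φ').trace)
      = fun Φ' => c - (((1/2 : ℝ)) • traceCLM A) Φ' := by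
    funext Φ'
    simp [traceCLM_apply, smul_eq_mul]
  ext a b
  simp only [gradP, Matrix.of_apply, h, fderiv_const_sub, ContinuousLinearMap.fderiv]
  simp [traceCLM_single, smul_eq_mul]

lemma gradX_coord {N : ℕ} (i : Fin N) (x : Fin N → ℝ) (Φ : Fin N → Fin N → ℝ) :
    gradX (fun x' _ => x' i) x Φ = Pi.single i 1 := by
  funext k
  have h : (fun x' : Fin N → ℝ => x' i)
      = ⇑(ContinuousLinearMap.proj (R := ℝ) (φ := fun _ : Fin N => ℝ) i) := rfl
  simp only [gradX, h, ContinuousLinearMap.fderiv]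
  simp [Pi.single_apply, eq_comm]

lemma gradP_coord {N : ℕ} (i j : Fin N) (x : Fin N → ℝ) (Φ : Fin N → Fin N → ℝ) :
    gradP (fun _ Φ' => Φ' i j) x Φ
      = Matrix.of fun a b => if a = i ∧ b = j then (1:ℝ) else 0 := by
  ext a b
  have h : (fun Φ' : Fin N → Fin N → ℝ => Φ' i j)
      = ⇑((ContinuousLinearMap.proj (R := ℝ) (φ := fun _ : Fin N => ℝ) j).comp
          (ContinuousLinearMap.proj (R := ℝ) (φ := fun _ : Fin N => Fin N → ℝ) i)) := rfl
  simp only [gradP, Matrix.of_apply, h, ContinuousLinearMap.fderiv]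
  simp [Pi.single_apply]
  aesop

lemma sum_if_const {N : ℕ} (c : Prop) [Decidable c] (f : Fin N → ℝ) :
    ∑ k, (if c then f k else 0) = if c then ∑ k, f k else 0 := by
  split <;> simp

/-- for 𝓗(x,Φ) = H(x) − ½·tr(H''(x)·J·Φ) the Hamilton equations of the
bracket reproduce the two-system: {xᵢ,𝓗} = (J·𝓗'ₓ)ᵢ and {Φᵢⱼ,𝓗} = [H''(x)·J, Φ]ᵢⱼ. -/
theorem two_system_stmt_14 (n : ℕ) (H : (Fin (n+n) → ℝ) → ℝ) (hH : ContDiff ℝ (⊤ : ℕ∞) H)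
    (𝓗 : (Fin (n+n) → ℝ) → (Fin (n+n) → Fin (n+n) → ℝ) → ℝ)
    (h𝓗 : ∀ x Φ, 𝓗 x Φ = H x - (1/2) * (hess H x * Jmat n * Matrix.of Φ).trace) :
    (∀ (x : Fin (n+n) → ℝ) (Φ : Fin (n+n) → Fin (n+n) → ℝ) (i : Fin (n+n)),
      bracket n (fun x' _ => x' i) 𝓗 x Φ
        = (Jmat n).mulVec (fun k =>
            fderiv ℝ (fun x' => H x' - (1/2) * (hess H x' * Jmat n * Matrix.of Φ).trace)
              x (Pi.single k 1)) i)
    ∧ (∀ (x : Fin (n+n) → ℝ) (Φ : Fin (n+n) → Fin (n+n) → ℝ) (i j : Fin (n+n)),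
      bracket n (fun _ Φ' => Φ' i j) 𝓗 x Φ
        = ((hess H x * Jmat n) * Matrix.of Φ
            - Matrix.of Φ * (hess H x * Jmat n)) i j) := by
  have hPH : ∀ (x : Fin (n+n) → ℝ) (Φ : Fin (n+n) → Fin (n+n) → ℝ),
      gradP 𝓗 x Φ = Matrix.of fun a b => -(1/2) * (hess H x * Jmat n) b a := by
    intro x Φ
    have hfun : (fun Φ' => 𝓗 x Φ')
        = fun Φ' => H x - (1/2) * ((hess H x * Jmat n) * Matrix.of Φ').trace := by
      funext Φ'
      rw [h𝓗, Matrix.mul_assoc]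
    have : gradP 𝓗 x Φ
        = gradP (fun _ Φ' => H x - (1/2) * ((hess H x * Jmat n) * Matrix.of Φ').trace) x Φ := by
      unfold gradP
      rw [hfun]
    rw [this, gradP_H]
  constructor
  · intro x Φ i
    have hgX : gradX 𝓗 x Φ = fun k =>
        fderiv ℝ (fun x' => H x' - (1/2) * (hess H x' * Jmat n * Matrix.of Φ).trace)
          x (Pi.single k 1) := by
      have hfun : (fun x' => 𝓗 x' Φ)
          = fun x' => H x' - (1/2) * (hess H x' * Jmat n * Matrix.of Φ).trace := by
        funext x'
        exact h𝓗 x' Φ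
      unfold gradX
      rw [hfun]
    have hgP : gradP (fun x' _ => x' i) x Φ = 0 := by
      ext a b
      simp [gradP, fderiv_const]
    rw [bracket, hgX, hgP, gradX_coord]
    simp [single_dotProduct]
  · intro x Φ i j
    have hgX : gradX (fun _ Φ' => Φ' i j) x Φ = 0 := by
      funext k
      simp [gradX, fderiv_const]
    rw [bracket, hgX, hPH, gradP_coord]
    set A := hess H x * Jmat n with hA
    simp only [zero_dotProduct, zero_add, Matrix.trace, Matrix.diag,
      Matrix.mul_apply, Matrix.sub_apply, Matrix.transpose_apply, Matrix.of_apply,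
      ite_and, ite_mul, mul_ite, mul_zero, zero_mul, one_mul, mul_one, sum_if_const,
      mul_sub, Finset.mul_sum, Finset.sum_sub_distrib, Finset.sum_ite_eq, Finset.sum_ite_eq',
      Finset.mem_univ, if_true]
    have h1 : ∑ k, 2 * (Φ i k * (-(1/2) * A k j)) = -∑ k, Φ i k * A k j := by
      rw [← Finset.sum_neg_distrib]
      exact Finset.sum_congr rfl fun k _ => by ring
    have h2 : ∑ k, 2 * (Φ k j * (-(1/2) * A i k)) = -∑ k, A i k * Φ k j := by
      rw [← Finset.sum_neg_distrib]
      exact Finset.sum_congr rfl fun k _ => by ring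
    rw [h1, h2]
    ring
end

section
/- The function det Φ is a Casimir function of the bracket {U,V}(x,Φ) = (U')ᵀ·J·V' + 2·tr(Φᵀ·[∇_Φ U, ∇_Φ V]): for every smooth U, {det Φ, U} = 0. -/
open Matrix

/-- The determinant as a continuous multilinear map of the rows. -/
noncomputable def detCML (N : ℕ) : ContinuousMultilinearMap ℝ (fun _ : Fin N => Fin N → ℝ) ℝ where
  toMultilinearMap := (Matrix.detRowAlternating : ((Fin N → ℝ) [⋀^Fin N]→ₗ[ℝ] ℝ)).toMultilinearMap
  cont := by
    have h : Continuous fun m : Fin N → Fin N → ℝ => (Matrix.of m).det := by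
      simp only [Matrix.det_apply, Units.smul_def, zsmul_eq_mul, Matrix.of_apply]
      exact continuous_finset_sum _ fun σ _ =>
        Continuous.mul continuous_const <| continuous_finset_prod _ fun i _ =>
          ((continuous_apply i).comp (continuous_apply (σ i)))
    exact h

/-- ∇_Φ det Φ = (adj Φ)ᵀ. -/
lemma gradP_det {N : ℕ} (x : Fin N → ℝ) (Φ : Fin N → Fin N → ℝ) :
    gradP (fun _ Φ' => (Matrix.of Φ').det) x Φ = (Matrix.adjugate (Matrix.of Φ))ᵀ := by
  have hd := (detCML N).hasFDerivAt (x := Φ)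
  have hf : fderiv ℝ (fun Φ' => (Matrix.of Φ').det) Φ = (detCML N).linearDeriv Φ := hd.fderiv
  ext i j
  simp only [gradP, Matrix.of_apply, hf, ContinuousMultilinearMap.linearDeriv_apply,
    Matrix.transpose_apply]
  rw [Finset.sum_eq_single i]
  · have : Function.update Φ i ((Pi.single i (Pi.single j 1) : Fin N → Fin N → ℝ) i) =
        (Matrix.of Φ).updateRow i (Pi.single j 1) := by
      simp [Matrix.updateRow]; rfl
    rw [this, Matrix.adjugate_apply]
    rfl
  · intro k _ hk
    have : Function.update Φ k ((Pi.single i (Pi.single j 1) : Fin N → Fin N → ℝ) k) =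
        Function.update Φ k 0 := by
      rw [Pi.single_eq_of_ne hk]
    rw [this]
    exact Matrix.det_eq_zero_of_row_eq_zero k (fun l => by simp)
  · simp

/-- det Φ is a Casimir function of the bracket: {det Φ, U} = 0 for
every function U. -/
theorem two_system_stmt_16 (n : ℕ)
    (U : (Fin (n+n) → ℝ) → (Fin (n+n) → Fin (n+n) → ℝ) → ℝ)
    (x : Fin (n+n) → ℝ) (Φ : Fin (n+n) → Fin (n+n) → ℝ) :
    bracket n (fun _ Φ' => (Matrix.of Φ').det) U x Φ = 0 := by
  have hx : gradX (fun _ Φ' => (Matrix.of Φ').det) x Φ = 0 := by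
    funext i
    simp [gradX]
  set A := Matrix.adjugate (Matrix.of Φ) with hA
  set G := gradP U x Φ with hG
  have hgp : gradP (fun _ Φ' => (Matrix.of Φ').det) x Φ = Aᵀ := gradP_det x Φ
  have key : ((Matrix.of Φ)ᵀ * (Aᵀ * G - G * Aᵀ)).trace = 0 := by
    have h1 : ((Matrix.of Φ)ᵀ * (Aᵀ * G)).trace
        = (((Matrix.of Φ).det • (1 : Matrix (Fin (n+n)) (Fin (n+n)) ℝ))ᵀ * G).trace := by
      rw [← mul_assoc, ← Matrix.transpose_mul, Matrix.adjugate_mul]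
    have h2 : ((Matrix.of Φ)ᵀ * (G * Aᵀ)).trace
        = (((Matrix.of Φ).det • (1 : Matrix (Fin (n+n)) (Fin (n+n)) ℝ))ᵀ * G).trace := by
      rw [← mul_assoc, Matrix.trace_mul_cycle, ← Matrix.transpose_mul, Matrix.mul_adjugate]
    rw [mul_sub, Matrix.trace_sub, h1, h2, sub_self]
  rw [bracket, hx, hgp, zero_dotProduct, key]
  ring
end
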